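/- Let f, g : ℂ → ℂ be smooth and suppose (ð₁f)(z) = 0 for every z ∈ ℂ. Then for every z ∈ ℂ: 40·f(z)·(ð₀(ð₋₁g))(z) − 48·(ð₁(f·ð₋₁g))(z) + 8·(ð₁(ð₀(f·g)))(z) = 0. (This is the paper's cancellation Eq. (48)–(49): with f = φ₀⁰ of spin weight 1 satisfying ðφ₀⁰ = 0, g = φ̄₀⁰ of spin weight −1, φ̄₁¹ = −ð₋₁g and φ̄₂² = (1/2)ð₀ð₋₁g, the Maxwell source combination 80πφ₀⁰φ̄₂² + 48πð(φ₀⁰φ̄₁¹) + 8πð²(φ₀⁰φ̄₀⁰) vanishes identically, so the electromagnetic field does not contribute to the equation determining Ψ₀¹.) -/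

import Mathlib

open Complex

/-- The Wirtinger derivative `∂_z f = (1/2)(∂ₓf − i∂_yf)` of `f : ℂ → ℂ`,
viewed as a real-differentiable function on `ℝ²`. -/
noncomputable def wirtD (f : ℂ → ℂ) (z : ℂ) : ℂ :=
  (1 / 2 : ℂ) * (fderiv ℝ f z 1 - Complex.I * fderiv ℝ f z Complex.I)

/-- The conjugate Wirtinger derivative `∂_z̄ f = (1/2)(∂ₓf + i∂_yf)`. -/
noncomputable def wirtDBar (f : ℂ → ℂ) (z : ℂ) : ℂ :=
  (1 / 2 : ℂ) * (fderiv ℝ f z 1 + Complex.I * fderiv ℝ f z Complex.I)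

/-- The spin-weight-`s` Newman–Penrose operator
`(ð_s f)(z) = 2^(−1/2) (1+|z|²)^(1−s) ∂_z̄[(1+|z|²)^s f](z)`. -/
noncomputable def edth (s : ℤ) (f : ℂ → ℂ) (z : ℂ) : ℂ :=
  (Real.sqrt 2 : ℂ)⁻¹ * (1 + ‖z‖ ^ 2 : ℂ) ^ (1 - s) *
    wirtDBar (fun w => (1 + ‖w‖ ^ 2 : ℂ) ^ s * f w) z

/-- The spin-weight-`s` Newman–Penrose operator
`(ð̄_s f)(z) = 2^(−1/2) (1+|z|²)^(1+s) ∂_z[(1+|z|²)^(−s) f](z)`. -/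
noncomputable def edthBar (s : ℤ) (f : ℂ → ℂ) (z : ℂ) : ℂ :=
  (Real.sqrt 2 : ℂ)⁻¹ * (1 + ‖z‖ ^ 2 : ℂ) ^ (1 + s) *
    wirtD (fun w => (1 + ‖w‖ ^ 2 : ℂ) ^ (-s) * f w) z

/-- The representative `Y_k(z) = z^k (1+|z|²)^(−2)` of the spin-weight-2,
`l = 2` spherical harmonic `₂Y_{2,k−2}` in the stereographic chart. -/
noncomputable def Ysph (k : ℕ) (z : ℂ) : ℂ :=
  z ^ k / (1 + ‖z‖ ^ 2 : ℂ) ^ 2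

noncomputable def Pc (z : ℂ) : ℂ := (1 + ‖z‖ ^ 2 : ℂ)

lemma contDiff_Pc : ContDiff ℝ (⊤ : ℕ∞) Pc := by
  have : Pc = fun z : ℂ => 1 + z * (starRingEnd ℂ) z := by
    funext z
    simp [Pc, Complex.mul_conj, ← Complex.sq_norm]
  rw [this]
  exact contDiff_const.add (contDiff_id.mul Complex.conjCLE.contDiff)

lemma Pc_ne (z : ℂ) : Pc z ≠ 0 := by
  have : Pc z = ((1 + ‖z‖ ^ 2 : ℝ) : ℂ) := by push_cast [Pc]; ring
  rw [this]
  exact_mod_cast (by positivity : (1 + ‖z‖ ^ 2 : ℝ) ≠ 0)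

lemma contDiff_PcZpow (s : ℤ) : ContDiff ℝ (⊤ : ℕ∞) (fun z => Pc z ^ s) := by
  cases s with
  | ofNat n => simpa [zpow_natCast] using contDiff_Pc.pow n
  | negSucc n =>
      simp only [zpow_negSucc]
      exact (contDiff_Pc.pow (n + 1)).inv (fun z => pow_ne_zero _ (Pc_ne z))

lemma contDiff_wirtDBar {h : ℂ → ℂ} (hh : ContDiff ℝ (⊤ : ℕ∞) h) :
    ContDiff ℝ (⊤ : ℕ∞) (wirtDBar h) := by
  have hd : ContDiff ℝ (⊤ : ℕ∞) (fderiv ℝ h) := hh.fderiv_right (by simp)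
  exact contDiff_const.mul ((hd.clm_apply contDiff_const).add
    (contDiff_const.mul (hd.clm_apply contDiff_const)))

lemma wirtDBar_mul {f g : ℂ → ℂ} {z : ℂ} (hf : DifferentiableAt ℝ f z)
    (hg : DifferentiableAt ℝ g z) :
    wirtDBar (fun w => f w * g w) z = wirtDBar f z * g z + f z * wirtDBar g z := by
  unfold wirtDBar
  rw [fderiv_fun_mul hf hg]
  simp only [ContinuousLinearMap.add_apply, ContinuousLinearMap.smul_apply, smul_eq_mul]
  ring

/-- The Maxwell-source cancellation: if the spin-weight-1 function `f`
satisfies `ð₁f = 0`, then for any smooth spin-weight-(−1) function `g`,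
`40·f·ð₀(ð₋₁g) − 48·ð₁(f·ð₋₁g) + 8·ð₁(ð₀(f·g)) = 0`, so the electromagnetic
source combination `80πφ₀⁰φ̄₂² + 48πð(φ₀⁰φ̄₁¹) + 8πð²(φ₀⁰φ̄₀⁰)` vanishes. -/
theorem maxwell_source_cancellation (f g : ℂ → ℂ)
    (hf : ContDiff ℝ (⊤ : ℕ∞) f) (hg : ContDiff ℝ (⊤ : ℕ∞) g)
    (hker : ∀ z : ℂ, edth 1 f z = 0) :
    ∀ z : ℂ,
      40 * f z * edth 0 (edth (-1) g) z
        - 48 * edth 1 (fun w => f w * edth (-1) g w) z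
        + 8 * edth 1 (edth 0 (fun w => f w * g w)) z = 0 := by
  intro z
  set c : ℂ := (Real.sqrt 2 : ℂ)⁻¹ with hc_def
  have hc : c ≠ 0 := by
    rw [hc_def]
    simp [Real.sqrt_eq_zero']
  have edth_def : ∀ (s : ℤ) (h : ℂ → ℂ) (w : ℂ), edth s h w
      = c * Pc w ^ (1 - s) * wirtDBar (fun v => Pc v ^ s * h v) w := fun _ _ _ => rfl
  have hker' : ∀ w, wirtDBar (fun v => Pc v ^ (1 : ℤ) * f v) w = 0 := by
    intro w
    have h0 := hker w
    rw [edth_def] at h0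
    simpa [hc] using h0
  set q : ℂ → ℂ := fun w => Pc w ^ (-1 : ℤ) * g w with hq_def
  have hq : ContDiff ℝ (⊤ : ℕ∞) q := (contDiff_PcZpow (-1)).mul hg
  set u : ℂ → ℂ := edth (-1) g with hu_def
  have hu_eq : u = fun w => c * Pc w ^ (2 : ℤ) * wirtDBar q w := by
    funext w
    rw [hu_def, edth_def, show ((1:ℤ) - -1) = 2 by norm_num]
  have hu : ContDiff ℝ (⊤ : ℕ∞) u := by
    rw [hu_eq]
    exact (contDiff_const.mul (contDiff_PcZpow 2)).mul (contDiff_wirtDBar hq)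
  have hPf : ContDiff ℝ (⊤ : ℕ∞) (fun w => Pc w ^ (1 : ℤ) * f w) := (contDiff_PcZpow 1).mul hf
  have key : ∀ w, wirtDBar (fun v => (Pc v ^ (1 : ℤ) * f v) * u v) w
      = Pc w ^ (1 : ℤ) * f w * wirtDBar u w := by
    intro w
    rw [wirtDBar_mul (hPf.differentiable (by simp) w) (hu.differentiable (by simp) w), hker' w]
    ring
  have hA : edth 0 u z = c * Pc z ^ (1 : ℤ) * wirtDBar u z := by
    rw [edth_def]
    norm_num
  have hB : edth 1 (fun w => f w * u w) z = c * (Pc z ^ (1 : ℤ) * f z * wirtDBar u z) := by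
    rw [edth_def]
    have hsplit : (fun v => Pc v ^ (1 : ℤ) * (f v * u v))
        = fun v => (Pc v ^ (1 : ℤ) * f v) * u v := by
      funext v; ring
    rw [hsplit, key z]
    norm_num
  have hfg_split : (fun v => f v * g v) = fun v => (Pc v ^ (1 : ℤ) * f v) * q v := by
    funext v
    rw [hq_def]
    simp only [zpow_one, zpow_neg_one]
    rw [show Pc v * f v * ((Pc v)⁻¹ * g v) = Pc v * (Pc v)⁻¹ * (f v * g v) by ring,
      mul_inv_cancel₀ (Pc_ne v), one_mul]
  have hDfg : ∀ w, wirtDBar (fun v => f v * g v) w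
      = (Pc w ^ (1 : ℤ) * f w) * wirtDBar q w := by
    intro w
    rw [hfg_split,
      wirtDBar_mul (hPf.differentiable (by simp) w) (hq.differentiable (by simp) w), hker' w]
    ring
  have hinner : (fun w => Pc w ^ (1 : ℤ) * edth 0 (fun v => f v * g v) w)
      = fun w => (Pc w ^ (1 : ℤ) * f w) * u w := by
    funext w
    rw [edth_def]
    simp only [zpow_zero, one_mul]
    rw [hDfg w, hu_eq]
    beta_reduce
    have h1 : ((1:ℤ) - 0) = 1 := by norm_num
    have h2 : Pc w ^ (2 : ℤ) = Pc w * Pc w := by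
      rw [show (2 : ℤ) = 1 + 1 by norm_num, zpow_add₀ (Pc_ne w), zpow_one]
    simp only [h1, h2, zpow_one]
    ring
  have hC : edth 1 (edth 0 (fun w => f w * g w)) z
      = c * (Pc z ^ (1 : ℤ) * f z * wirtDBar u z) := by
    rw [edth_def, hinner, key z]
    norm_num
  rw [hA, hB, hC]
  ring
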